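/- Let V ∈ ℕ, c > 0 with cV ≥ σ_G, and for each i ∈ {1,…,V} let A_i ∈ ℝ^{m×n_i}, let F_i : ℝ^{n_i} → ℝ be convex and differentiable, and let G : ℝ^m → ℝ be differentiable and σ_G-weakly convex. Define L_c({p_i},{ν_i},q) = Σ_{i=1}^V [F_i(p_i) + ⟨ν_i, A_i p_i − q⟩ + (c/2)‖A_i p_i − q‖²] + G(q), and let w* = ({p_i^*},{ν_i^*},q^*) be a stationary point (A_i p_i^* = q^*, ∇F_i(p_i^*) = −A_iᵀν_i^* for all i, ∇G(q^*) = Σ_i ν_i^*). Suppose w = ({p_i},{ν_i},q) satisfies ∇F_i(p_i) = −A_iᵀν_i for all i and ∇G(q) = Σ_{i=1}^V [ν_i + c(A_i p_i − q)], together with ‖A_i p_i − A_i p_i^*‖ ≤ ε for all i and ‖∇L_c(w)‖ ≥ η for some ε, η > 0. Then L_c(w) − L_c(w*) ≤ (1 + cVε²/(2η²))‖∇L_c(w)‖²; in particular (L_c(w) − L_c(w*))^{1/2} ≤ C‖∇L_c(w)‖ with C = (1 + cVε²/(2η²))^{1/2}, i.e., L_c satisfies the Łojasiewicz inequality with exponent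 θ = 1/2 in this neighborhood of w*. -/

import Mathlib

/-!
Convexity of each `F_i` at `p_i`, where `∇F_i(p_i) = -A_iᵀ ν_i`, and `σ_G`-weak convexity of `G`
at `q`, where `∇G(q) = ∑ (ν_i + c (A_i p_i - q))`, bound `L_c(w) - L_c(w*)` by
`∑ (c/2) ‖A_i p_i^* - A_i p_i‖² + ((σ_G - cV)/2) ‖q^* - q‖² ≤ cVε²/2`.
Since `‖∇L_c(w)‖ ≥ η`, this is at most `(cVε²/(2η²)) ‖∇L_c(w)‖²`: only this lower bound on
the gradient enters, not its form.
-/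

open Matrix RealInnerProductSpace

theorem ConvexOn.add_le_of_hasFDerivAt {E : Type*} [NormedAddCommGroup E] [NormedSpace ℝ E]
    {f : E → ℝ} {f' : E →L[ℝ] ℝ} {x : E} (hf : ConvexOn ℝ Set.univ f) (hf' : HasFDerivAt f f' x)
    (y : E) : f x + f' (y - x) ≤ f y := by
  let ℓ : ℝ →ᵃ[ℝ] E := AffineMap.lineMap x y
  have hφ : HasDerivAt (f ∘ ℓ) (f' (y - x)) 0 :=
    (by simpa [ℓ] using hf' : HasFDerivAt f f' (ℓ 0)).comp_hasDerivAt 0 AffineMap.hasDerivAt_lineMap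
  have := (hf.comp_affineMap ℓ).le_slope_of_hasDerivAt trivial trivial zero_lt_one hφ
  simp only [slope_def_field, Function.comp_apply, ℓ, AffineMap.lineMap_apply_zero,
    AffineMap.lineMap_apply_one, sub_zero, div_one] at this
  linarith

theorem Matrix.toEuclideanLin_transpose_eq_adjoint {m n : Type*} [Fintype m] [DecidableEq m]
    [Fintype n] [DecidableEq n] (A : Matrix m n ℝ) :
    Aᵀ.toEuclideanLin = A.toEuclideanLin.adjoint := by
  rw [← conjTranspose_eq_transpose_of_trivial, toEuclideanLin_conjTranspose_eq_adjoint]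

theorem le_one_add_div_sq_mul_of_le_of_le_sqrt {D K S η : ℝ} (hη : 0 < η) (hK : 0 ≤ K)
    (hD : D ≤ K) (hS : η ≤ √S) : D ≤ (1 + K / η ^ 2) * S := by
  have hηS : η ^ 2 ≤ S := (Real.le_sqrt' hη).1 hS
  have hS0 : 0 ≤ S := (sq_nonneg η).trans hηS
  calc D ≤ K := hD
    _ = K / η ^ 2 * η ^ 2 := by field_simp
    _ ≤ K / η ^ 2 * S := by gcongr
    _ ≤ (1 + K / η ^ 2) * S := by nlinarith

section ConsensusLagrangian

variable {ι : Type*} [Fintype ι] {E : ι → Type*} [∀ i, NormedAddCommGroup (E i)]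
  [∀ i, InnerProductSpace ℝ (E i)] [∀ i, FiniteDimensional ℝ (E i)]
  {H : Type*} [NormedAddCommGroup H] [InnerProductSpace ℝ H] [FiniteDimensional ℝ H]

noncomputable def consensusLagrangian (c : ℝ) (A : ∀ i, E i →ₗ[ℝ] H) (F : ∀ i, E i → ℝ) (G : H → ℝ)
    (p : ∀ i, E i) (ν : ι → H) (q : H) : ℝ :=
  (∑ i, (F i (p i) + ⟪ν i, A i (p i) - q⟫ + c / 2 * ‖A i (p i) - q‖ ^ 2)) + G q

theorem consensusLagrangian_block_sub_le {E : Type*} [NormedAddCommGroup E]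
    [InnerProductSpace ℝ E] [FiniteDimensional ℝ E] {F : E → ℝ} {A : E →ₗ[ℝ] H}
    {c ε : ℝ} {p pstar : E} {ν q qstar : H} (hF : ConvexOn ℝ Set.univ F)
    (hFp : DifferentiableAt ℝ F p) (hgrad : gradient F p = -(A.adjoint ν))
    (hstar : A pstar = qstar) (hres : ‖A p - A pstar‖ ≤ ε) (hc : 0 ≤ c) :
    F p + ⟪ν, A p - q⟫ + c / 2 * ‖A p - q‖ ^ 2 - F pstar
      ≤ ⟪ν + c • (A p - q), qstar - q⟫ + c / 2 * ε ^ 2 - c / 2 * ‖qstar - q‖ ^ 2 := by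
  have hconv : F p - F pstar ≤ ⟪ν, qstar - A p⟫ := by
    have := hF.add_le_of_hasFDerivAt hFp.hasGradientAt.hasFDerivAt pstar
    rw [InnerProductSpace.toDual_apply_apply, hgrad, inner_neg_left,
      LinearMap.adjoint_inner_left, map_sub, hstar] at this
    linarith
  have hdist : c / 2 * ‖qstar - A p‖ ^ 2 ≤ c / 2 * ε ^ 2 := by
    rw [← hstar, norm_sub_rev]
    gcongr
  set r := A p - q
  set e := qstar - q
  have hsplit : qstar - A p = e - r := by simp only [r, e]; abel
  rw [hsplit, inner_sub_right] at hconv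
  rw [hsplit, norm_sub_sq_real, real_inner_comm] at hdist
  rw [inner_add_left, real_inner_smul_left]
  linarith

theorem consensusLagrangian_sub_le {c σ ε : ℝ} {A : ∀ i, E i →ₗ[ℝ] H} {F : ∀ i, E i → ℝ}
    {G : H → ℝ} {p pstar : ∀ i, E i} {ν νstar : ι → H} {q qstar : H}
    (hF : ∀ i, ConvexOn ℝ Set.univ (F i)) (hFp : ∀ i, DifferentiableAt ℝ (F i) (p i))
    (hgradF : ∀ i, gradient (F i) (p i) = -((A i).adjoint (ν i)))
    (hgradG : gradient G q = ∑ i, (ν i + c • (A i (p i) - q)))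
    (hG : G qstar ≥ G q + ⟪gradient G q, qstar - q⟫ - σ / 2 * ‖qstar - q‖ ^ 2)
    (hσ : σ ≤ c * Fintype.card ι) (hstar : ∀ i, A i (pstar i) = qstar)
    (hres : ∀ i, ‖A i (p i) - A i (pstar i)‖ ≤ ε) (hc : 0 ≤ c) :
    consensusLagrangian c A F G p ν q - consensusLagrangian c A F G pstar νstar qstar
      ≤ c * Fintype.card ι * ε ^ 2 / 2 := by
  have hLstar : consensusLagrangian c A F G pstar νstar qstar = ∑ i, F i (pstar i) + G qstar := by
    simp [consensusLagrangian, hstar]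
  have hblocks := Finset.sum_le_sum fun i (_ : i ∈ Finset.univ) =>
    consensusLagrangian_block_sub_le (q := q) (hF i) (hFp i) (hgradF i) (hstar i) (hres i) hc
  simp only [Finset.sum_sub_distrib, Finset.sum_add_distrib, Finset.sum_const, Finset.card_univ,
    nsmul_eq_mul] at hblocks
  rw [hgradG, sum_inner] at hG
  have hσe : σ / 2 * ‖qstar - q‖ ^ 2 ≤ c * Fintype.card ι / 2 * ‖qstar - q‖ ^ 2 := by gcongr
  rw [hLstar]
  simp only [consensusLagrangian, Finset.sum_add_distrib]
  linarith

end ConsensusLagrangian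

theorem statement16_general {V m : ℕ} {n : Fin V → ℕ} (c σG : ℝ) (hc : 0 < c)
    (hcV : c * V ≥ σG)
    (A : (i : Fin V) → Matrix (Fin m) (Fin (n i)) ℝ)
    (F : (i : Fin V) → EuclideanSpace ℝ (Fin (n i)) → ℝ)
    (hFconv : ∀ i, ConvexOn ℝ Set.univ (F i))
    (hFdiff : ∀ i, Differentiable ℝ (F i))
    (G : EuclideanSpace ℝ (Fin m) → ℝ)
    (hGweak : ∀ x y : EuclideanSpace ℝ (Fin m),
      G y ≥ G x + ⟪gradient G x, y - x⟫ - σG / 2 * ‖y - x‖ ^ 2)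
    (Lc : ((i : Fin V) → EuclideanSpace ℝ (Fin (n i))) →
      (Fin V → EuclideanSpace ℝ (Fin m)) → EuclideanSpace ℝ (Fin m) → ℝ)
    (hLc : ∀ p ν q, Lc p ν q =
      (∑ i, (F i (p i) + ⟪ν i, Matrix.toEuclideanLin (A i) (p i) - q⟫
        + c / 2 * ‖Matrix.toEuclideanLin (A i) (p i) - q‖ ^ 2)) + G q)
    (pstar : (i : Fin V) → EuclideanSpace ℝ (Fin (n i)))
    (νstar : Fin V → EuclideanSpace ℝ (Fin m)) (qstar : EuclideanSpace ℝ (Fin m))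
    (hstat1 : ∀ i, Matrix.toEuclideanLin (A i) (pstar i) = qstar)
    (p : (i : Fin V) → EuclideanSpace ℝ (Fin (n i)))
    (ν : Fin V → EuclideanSpace ℝ (Fin m)) (q : EuclideanSpace ℝ (Fin m))
    (h1 : ∀ i, gradient (F i) (p i) = -(Matrix.toEuclideanLin (A i)ᵀ (ν i)))
    (h2 : gradient G q = ∑ i, (ν i + c • (Matrix.toEuclideanLin (A i) (p i) - q)))
    (ε η : ℝ) (hη : 0 < η)
    (hres : ∀ i, ‖Matrix.toEuclideanLin (A i) (p i)
      - Matrix.toEuclideanLin (A i) (pstar i)‖ ≤ ε)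
    (hgrad : η ≤ Real.sqrt
      ((∑ i, ‖gradient (fun x => Lc (Function.update p i x) ν q) (p i)‖ ^ 2)
        + (∑ i, ‖gradient (fun x => Lc p (Function.update ν i x) q) (ν i)‖ ^ 2)
        + ‖gradient (fun x => Lc p ν x) q‖ ^ 2)) :
    Lc p ν q - Lc pstar νstar qstar
      ≤ (1 + c * V * ε ^ 2 / (2 * η ^ 2)) *
          ((∑ i, ‖gradient (fun x => Lc (Function.update p i x) ν q) (p i)‖ ^ 2)
            + (∑ i, ‖gradient (fun x => Lc p (Function.update ν i x) q) (ν i)‖ ^ 2)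
            + ‖gradient (fun x => Lc p ν x) q‖ ^ 2)
    ∧ Real.sqrt (Lc p ν q - Lc pstar νstar qstar)
        ≤ Real.sqrt (1 + c * V * ε ^ 2 / (2 * η ^ 2)) *
            Real.sqrt
              ((∑ i, ‖gradient (fun x => Lc (Function.update p i x) ν q) (p i)‖ ^ 2)
                + (∑ i, ‖gradient (fun x => Lc p (Function.update ν i x) q) (ν i)‖ ^ 2)
                + ‖gradient (fun x => Lc p ν x) q‖ ^ 2) := by
  have hL : ∀ p ν q, Lc p ν q =
      consensusLagrangian c (fun i => (A i).toEuclideanLin) F G p ν q := hLc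
  have hgradF : ∀ i, gradient (F i) (p i) = -((A i).toEuclideanLin.adjoint (ν i)) := by
    simpa only [Matrix.toEuclideanLin_transpose_eq_adjoint] using h1
  have hkey : Lc p ν q - Lc pstar νstar qstar ≤ c * V * ε ^ 2 / 2 := by
    simpa only [hL, Fintype.card_fin] using consensusLagrangian_sub_le (νstar := νstar)
      hFconv (fun i => hFdiff i (p i)) hgradF h2 (hGweak q qstar) (by simpa using hcV) hstat1
      hres hc.le
  have hbound := le_one_add_div_sq_mul_of_le_of_le_sqrt hη (by positivity) hkey hgrad
  rw [div_div] at hbound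
  refine ⟨hbound, ?_⟩
  rw [← Real.sqrt_mul (by positivity)]
  exact Real.sqrt_le_sqrt hbound

/-- Łojasiewicz inequality with exponent `1/2` for the consensus augmented
Lagrangian `L_c`: with each `F_i` convex differentiable, `G` differentiable `σ_G`-weakly
convex, `cV ≥ σ_G`, a stationary point `w* = ({p_i^*},{ν_i^*},q^*)` and a point
`w = ({p_i},{ν_i},q)` satisfying the ADMM first-order conditions, if
`‖A_i p_i − A_i p_i^*‖ ≤ ε` for all `i` and `‖∇L_c(w)‖ ≥ η` (gradient computed blockwise),
then `L_c(w) − L_c(w*) ≤ (1 + cVε²/(2η²))‖∇L_c(w)‖²`, and in particular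
`(L_c(w) − L_c(w*))^{1/2} ≤ C‖∇L_c(w)‖` with `C = (1 + cVε²/(2η²))^{1/2}`. -/
theorem statement16 {V m : ℕ} {n : Fin V → ℕ} (c σG : ℝ) (hc : 0 < c)
    (hcV : c * V ≥ σG)
    (A : (i : Fin V) → Matrix (Fin m) (Fin (n i)) ℝ)
    (F : (i : Fin V) → EuclideanSpace ℝ (Fin (n i)) → ℝ)
    (hFconv : ∀ i, ConvexOn ℝ Set.univ (F i))
    (hFdiff : ∀ i, Differentiable ℝ (F i))
    (G : EuclideanSpace ℝ (Fin m) → ℝ) (hGdiff : Differentiable ℝ G)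
    (hGweak : ∀ x y : EuclideanSpace ℝ (Fin m),
      G y ≥ G x + ⟪gradient G x, y - x⟫ - σG / 2 * ‖y - x‖ ^ 2)
    (Lc : ((i : Fin V) → EuclideanSpace ℝ (Fin (n i))) →
      (Fin V → EuclideanSpace ℝ (Fin m)) → EuclideanSpace ℝ (Fin m) → ℝ)
    (hLc : ∀ p ν q, Lc p ν q =
      (∑ i, (F i (p i) + ⟪ν i, Matrix.toEuclideanLin (A i) (p i) - q⟫
        + c / 2 * ‖Matrix.toEuclideanLin (A i) (p i) - q‖ ^ 2)) + G q)
    (pstar : (i : Fin V) → EuclideanSpace ℝ (Fin (n i)))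
    (νstar : Fin V → EuclideanSpace ℝ (Fin m)) (qstar : EuclideanSpace ℝ (Fin m))
    (hstat1 : ∀ i, Matrix.toEuclideanLin (A i) (pstar i) = qstar)
    (hstat2 : ∀ i, gradient (F i) (pstar i) = -(Matrix.toEuclideanLin (A i)ᵀ (νstar i)))
    (hstat3 : gradient G qstar = ∑ i, νstar i)
    (p : (i : Fin V) → EuclideanSpace ℝ (Fin (n i)))
    (ν : Fin V → EuclideanSpace ℝ (Fin m)) (q : EuclideanSpace ℝ (Fin m))
    (h1 : ∀ i, gradient (F i) (p i) = -(Matrix.toEuclideanLin (A i)ᵀ (ν i)))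
    (h2 : gradient G q = ∑ i, (ν i + c • (Matrix.toEuclideanLin (A i) (p i) - q)))
    (ε η : ℝ) (hε : 0 < ε) (hη : 0 < η)
    (hres : ∀ i, ‖Matrix.toEuclideanLin (A i) (p i)
      - Matrix.toEuclideanLin (A i) (pstar i)‖ ≤ ε)
    (hgrad : η ≤ Real.sqrt
      ((∑ i, ‖gradient (fun x => Lc (Function.update p i x) ν q) (p i)‖ ^ 2)
        + (∑ i, ‖gradient (fun x => Lc p (Function.update ν i x) q) (ν i)‖ ^ 2)
        + ‖gradient (fun x => Lc p ν x) q‖ ^ 2)) :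
    Lc p ν q - Lc pstar νstar qstar
      ≤ (1 + c * V * ε ^ 2 / (2 * η ^ 2)) *
          ((∑ i, ‖gradient (fun x => Lc (Function.update p i x) ν q) (p i)‖ ^ 2)
            + (∑ i, ‖gradient (fun x => Lc p (Function.update ν i x) q) (ν i)‖ ^ 2)
            + ‖gradient (fun x => Lc p ν x) q‖ ^ 2)
    ∧ Real.sqrt (Lc p ν q - Lc pstar νstar qstar)
        ≤ Real.sqrt (1 + c * V * ε ^ 2 / (2 * η ^ 2)) *
            Real.sqrt
              ((∑ i, ‖gradient (fun x => Lc (Function.update p i x) ν q) (p i)‖ ^ 2)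
                + (∑ i, ‖gradient (fun x => Lc p (Function.update ν i x) q) (ν i)‖ ^ 2)
                + ‖gradient (fun x => Lc p ν x) q‖ ^ 2) :=
  statement16_general c σG hc hcV A F hFconv hFdiff G hGweak Lc hLc pstar νstar qstar hstat1 p ν q
    h1 h2 ε η hη hres hgrad
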